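/- Let (μ_k) be a sequence of probability measures on ℝ^d and μ a probability measure on ℝ^d such that for Lebesgue-almost every z ∈ ℝ^d, the characteristic functions Φ_{μ_k}(z) converge to Φ_μ(z). Then μ_k converges weakly to μ. -/

import Mathlib

open MeasureTheory Filter Topology Real Complex GaussianFourier
open scoped ENNReal RealInnerProductSpace

/-- Characteristic function of a measure on ℝ^d. -/
noncomputable def charFn {d : ℕ} (ν : Measure (EuclideanSpace ℝ (Fin d)))
    (z : EuclideanSpace ℝ (Fin d)) : ℂ :=
  ∫ w, Complex.exp (((inner ℝ z w : ℝ) : ℂ) * Complex.I) ∂ν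

namespace StmtAux

variable {d : ℕ}

abbrev V (d : ℕ) := EuclideanSpace ℝ (Fin d)

lemma norm_exp_inner_mul_I (z w : V d) :
    ‖Complex.exp (((inner ℝ z w : ℝ) : ℂ) * Complex.I)‖ = 1 := by
  rw [Complex.norm_exp]
  simp

lemma charFn_norm_le (ν : Measure (V d)) [IsProbabilityMeasure ν] (z : V d) :
    ‖charFn ν z‖ ≤ 1 := by
  calc ‖charFn ν z‖ ≤ ∫ w, ‖Complex.exp (((inner ℝ z w : ℝ) : ℂ) * Complex.I)‖ ∂ν :=
        norm_integral_le_integral_norm _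
    _ = ∫ (_ : V d), (1:ℝ) ∂ν := by
        apply integral_congr_ae; filter_upwards with w; exact norm_exp_inner_mul_I z w
    _ = 1 := by simp

lemma continuous_inner_exp (w : V d) :
    Continuous fun z : V d => Complex.exp (((inner ℝ z w : ℝ) : ℂ) * Complex.I) := by
  refine Complex.continuous_exp.comp ?_
  exact (Complex.continuous_ofReal.comp (continuous_id.inner continuous_const)).mul
    continuous_const

lemma continuous_inner_exp' (z : V d) :
    Continuous fun w : V d => Complex.exp (((inner ℝ z w : ℝ) : ℂ) * Complex.I) := by
  refine Complex.continuous_exp.comp ?_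
  exact (Complex.continuous_ofReal.comp (continuous_const.inner continuous_id)).mul
    continuous_const

lemma continuous_charFn (ν : Measure (V d)) [IsProbabilityMeasure ν] :
    Continuous (charFn ν) := by
  apply continuous_of_dominated (bound := fun _ => (1:ℝ))
  · exact fun z => (continuous_inner_exp' z).aestronglyMeasurable
  · intro z
    filter_upwards with w
    exact le_of_eq (norm_exp_inner_mul_I z w)
  · exact integrable_const 1
  · filter_upwards with w using continuous_inner_exp w

noncomputable def gauss (d : ℕ) (t : ℝ) (w : V d) : ℝ :=
  (4 * π * t) ^ (-(d : ℝ)/2) * rexp (-(1/(4*t)) * ‖w‖^2)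

lemma continuous_gauss (t : ℝ) : Continuous (gauss d t) :=
  continuous_const.mul (Real.continuous_exp.comp (continuous_const.mul (continuous_norm.pow 2)))

lemma gauss_pos {t : ℝ} (ht : 0 < t) (w : V d) : 0 < gauss d t w := by
  have h4 : (0:ℝ) < 4 * π * t := by positivity
  exact mul_pos (Real.rpow_pos_of_pos h4 _) (Real.exp_pos _)

lemma integrable_rexp_neg_mul_sq_norm {b : ℝ} (hb : 0 < b) :
    Integrable (fun w : V d => rexp (-b * ‖w‖^2)) := by
  have h := (integrable_cexp_neg_mul_sq_norm_add (V := V d)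
      (b := (b:ℂ)) (by simpa using hb) 0 0).norm
  have : (fun w : V d => ‖Complex.exp (-(b:ℂ) * ‖w‖^2 + 0 * (((inner ℝ (0:V d) w : ℝ)):ℂ))‖)
      = fun w : V d => rexp (-b * ‖w‖^2) := by
    funext w
    have he : (-(b:ℂ) * ‖w‖^2 + 0 * (((inner ℝ (0:V d) w : ℝ)):ℂ)) = ((-b * ‖w‖^2 : ℝ) : ℂ) := by
      push_cast; ring
    rw [he, Complex.norm_exp, Complex.ofReal_re]
  rwa [this] at h

lemma integrable_gauss {t : ℝ} (ht : 0 < t) : Integrable (gauss d t) := by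
  have : (0:ℝ) < 1/(4*t) := by positivity
  exact (integrable_rexp_neg_mul_sq_norm this).const_mul _

lemma integral_gauss {t : ℝ} (ht : 0 < t) : ∫ w : V d, gauss d t w = 1 := by
  have hb : (0:ℝ) < 1/(4*t) := by positivity
  have h := integral_rexp_neg_mul_sq_norm (V := V d) hb
  rw [finrank_euclideanSpace_fin] at h
  unfold gauss
  rw [integral_const_mul, h]
  have h4 : (0:ℝ) < 4 * π * t := by positivity
  have : π / (1/(4*t)) = 4 * π * t := by field_simp
  rw [this, ← Real.rpow_add h4]
  rw [show -(d:ℝ)/2 + (d:ℝ)/2 = 0 by ring, Real.rpow_zero]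

lemma rpow_const_identity {t : ℝ} (ht : 0 < t) :
    ((2*π)^d : ℝ) * (4*π*t) ^ (-(d:ℝ)/2) = (π/t) ^ ((d:ℝ)/2) := by
  have hπ : (0:ℝ) < π := Real.pi_pos
  have h1 : ((2*π)^d : ℝ) = (4*π^2) ^ ((d:ℝ)/2) := by
    have h2 : (4*π^2 : ℝ) = (2*π) ^ ((2:ℕ):ℝ) := by
      rw [Real.rpow_natCast]; ring
    rw [h2, ← Real.rpow_natCast (2*π) d, ← Real.rpow_mul (by positivity),
      show ((2:ℕ):ℝ) * ((d:ℝ)/2) = (d:ℝ) by push_cast; ring]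
  have h3 : (π/t : ℝ) = (4*π^2)/(4*π*t) := by
    field_simp
  rw [h1, h3, Real.div_rpow (by positivity) (by positivity), show -(d:ℝ)/2 = -((d:ℝ)/2) by ring,
    Real.rpow_neg (by positivity)]
  exact (div_eq_mul_inv _ _).symm

lemma gauss_fourier {t : ℝ} (ht : 0 < t) (w : V d) :
    ∫ z : V d, Complex.exp (-(t:ℂ) * (‖z‖:ℂ)^2 + Complex.I * ((inner ℝ w z : ℝ) : ℂ))
      = (((2*π)^d : ℝ) : ℂ) * (gauss d t w : ℂ) := by
  have key := integral_cexp_neg_mul_sq_norm_add (V := V d) (b := (t:ℂ))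
    (by simpa using ht) Complex.I w
  rw [finrank_euclideanSpace_fin] at key
  rw [key]
  have hcast : ((π:ℂ) / (t:ℂ)) ^ ((d:ℂ) / 2) = (((π/t) ^ ((d:ℝ)/2) : ℝ) : ℂ) := by
    rw [Complex.ofReal_cpow (by positivity)]
    push_cast
    rfl
  have hexp : Complex.I ^ 2 * (‖w‖:ℂ)^2 / (4 * (t:ℂ)) = ((-(1/(4*t)) * ‖w‖^2 : ℝ) : ℂ) := by
    rw [Complex.I_sq]
    push_cast
    field_simp
  rw [hcast, hexp, ← Complex.ofReal_exp]
  unfold gauss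
  rw [← rpow_const_identity ht]
  push_cast
  ring

lemma gauss_pointwise_le {t δ : ℝ} (ht : 0 < t) (ht1 : t ≤ 1) (hδ : 0 < δ) {w : V d}
    (hw : δ ≤ ‖w‖) :
    gauss d t w ≤ ((4*π*t)^(-(d:ℝ)/2) * rexp (-(δ^2/(8*t)))) * rexp (-(1/8) * ‖w‖^2) := by
  have hA : (0:ℝ) ≤ (4*π*t)^(-(d:ℝ)/2) := by
    have : (0:ℝ) < 4*π*t := by positivity
    exact (Real.rpow_pos_of_pos this _).le
  have hsq : δ^2 ≤ ‖w‖^2 := by nlinarith [hδ.le, norm_nonneg w]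
  have hE : -(1/(4*t)) * ‖w‖^2 ≤ -(δ^2/(8*t)) + (-(1/8) * ‖w‖^2) := by
    rw [show -(δ^2/(8*t)) + (-(1/8) * ‖w‖^2) = -(δ^2/(8*t) + 1/8 * ‖w‖^2) by ring,
      show -(1/(4*t)) * ‖w‖^2 = -(1/(4*t) * ‖w‖^2) by ring, neg_le_neg_iff]
    have h8 : ‖w‖^2 / 8 ≤ ‖w‖^2/(8*t) := by
      apply div_le_div_of_nonneg_left (by positivity) (by positivity)
      nlinarith
    have h8' : δ^2/(8*t) ≤ ‖w‖^2/(8*t) := by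
      apply div_le_div_of_nonneg_right hsq (by positivity)
    calc δ^2/(8*t) + 1/8 * ‖w‖^2 ≤ ‖w‖^2/(8*t) + ‖w‖^2/(8*t) := by
          rw [show (1:ℝ)/8 * ‖w‖^2 = ‖w‖^2/8 by ring]; exact add_le_add h8' h8
      _ = 1/(4*t) * ‖w‖^2 := by field_simp; ring
  calc gauss d t w ≤ (4*π*t)^(-(d:ℝ)/2) * rexp (-(δ^2/(8*t)) + (-(1/8) * ‖w‖^2)) :=
        mul_le_mul_of_nonneg_left (Real.exp_le_exp.mpr hE) hA
    _ = _ := by rw [Real.exp_add]; ring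

lemma gauss_tail {δ ε : ℝ} (hδ : 0 < δ) (hε : 0 < ε) :
    ∃ t : ℝ, 0 < t ∧ t ≤ 1 ∧ ∫ w in (Metric.ball (0:V d) δ)ᶜ, gauss d t w < ε := by
  have hMint : Integrable (fun w : V d => rexp (-(1/8) * ‖w‖^2)) :=
    integrable_rexp_neg_mul_sq_norm (by norm_num)
  set M : ℝ := ∫ w : V d, rexp (-(1/8) * ‖w‖^2) with hM
  have hM0 : 0 ≤ M := integral_nonneg fun w => (Real.exp_pos _).le
  have h0 : Tendsto (fun u : ℝ => (4*π)^(-(d:ℝ)/2) * (u ^ ((d:ℝ)/2) * rexp (-(δ^2/8) * u)) * M)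
      atTop (𝓝 0) := by
    have := (tendsto_rpow_mul_exp_neg_mul_atTop_nhds_zero ((d:ℝ)/2) (δ^2/8) (by positivity))
    simpa using (this.const_mul ((4*π:ℝ)^(-(d:ℝ)/2))).mul_const M
  have hev := (h0.eventually_lt_const hε).and (eventually_ge_atTop (1:ℝ))
  obtain ⟨u, hu⟩ := hev.exists
  obtain ⟨huε, hu1⟩ := hu
  have hu0 : 0 < u := lt_of_lt_of_le one_pos hu1
  refine ⟨u⁻¹, inv_pos.mpr hu0, inv_le_one_of_one_le₀ hu1, ?_⟩
  set t := u⁻¹ with htdef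
  have ht : 0 < t := inv_pos.mpr hu0
  have ht1 : t ≤ 1 := inv_le_one_of_one_le₀ hu1
  set C : ℝ := (4*π*t)^(-(d:ℝ)/2) * rexp (-(δ^2/(8*t))) with hC
  have hC0 : 0 ≤ C := by
    have : (0:ℝ) < 4*π*t := by positivity
    exact mul_nonneg (Real.rpow_pos_of_pos this _).le (Real.exp_pos _).le
  have hCeq : C * M = (4*π)^(-(d:ℝ)/2) * (u ^ ((d:ℝ)/2) * rexp (-(δ^2/8) * u)) * M := by
    have h1 : (4*π*t)^(-(d:ℝ)/2) = (4*π)^(-(d:ℝ)/2) * u ^ ((d:ℝ)/2) := by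
      rw [Real.mul_rpow (by positivity) ht.le, htdef,
        show -(d:ℝ)/2 = -((d:ℝ)/2) by ring,
        Real.inv_rpow hu0.le, Real.rpow_neg hu0.le, inv_inv]
    have h2 : -(δ^2/(8*t)) = -(δ^2/8) * u := by
      rw [htdef]; field_simp
    rw [hC, h1, h2]; ring
  have hgauss_int : Integrable (gauss d t) := by
    have : (0:ℝ) < 1/(4*t) := by positivity
    exact (integrable_rexp_neg_mul_sq_norm this).const_mul _
  have hs : MeasurableSet (Metric.ball (0:V d) δ)ᶜ := Metric.isOpen_ball.measurableSet.compl
  calc ∫ w in (Metric.ball (0:V d) δ)ᶜ, gauss d t w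
      ≤ ∫ w in (Metric.ball (0:V d) δ)ᶜ, C * rexp (-(1/8) * ‖w‖^2) := by
        apply setIntegral_mono_on hgauss_int.integrableOn
          (hMint.const_mul C).integrableOn hs
        intro w hw
        have : δ ≤ ‖w‖ := by
          simp only [Set.mem_compl_iff, Metric.mem_ball, dist_zero_right, not_lt] at hw
          exact hw
        exact gauss_pointwise_le ht ht1 hδ this
    _ = C * ∫ w in (Metric.ball (0:V d) δ)ᶜ, rexp (-(1/8) * ‖w‖^2) := integral_const_mul _ _
    _ ≤ C * M := by
        apply mul_le_mul_of_nonneg_left _ hC0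
        exact setIntegral_le_integral hMint (Eventually.of_forall fun w => (Real.exp_pos _).le)
    _ < ε := by rw [hCeq]; exact huε

noncomputable def fHat (f : V d → ℝ) (z : V d) : ℂ :=
  ∫ y, (f y : ℂ) * Complex.exp (-(Complex.I * ((inner ℝ y z : ℝ) : ℂ)))

/-- The integrand multiplying the characteristic function. -/
noncomputable def hker (f : V d → ℝ) (t : ℝ) (z : V d) : ℂ :=
  ((((2*π)^d : ℝ) : ℂ))⁻¹ * Complex.exp (-(t:ℂ) * (‖z‖:ℂ)^2) * fHat f z

lemma norm_cexp_aux (t : ℝ) (z : V d) (r : ℝ) :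
    ‖Complex.exp (-(t:ℂ) * (‖z‖:ℂ)^2 + Complex.I * (r : ℂ))‖ = rexp (-t * ‖z‖^2) := by
  rw [Complex.norm_exp]
  congr 1
  rw [Complex.add_re, Complex.mul_re]
  simp [← Complex.ofReal_pow]

lemma continuous_fHat (f : V d → ℝ) (hf : Continuous f) (hsupp : HasCompactSupport f) :
    Continuous (fHat f) := by
  apply continuous_of_dominated (bound := fun y => |f y|)
  · intro z
    apply Continuous.aestronglyMeasurable
    exact (Complex.continuous_ofReal.comp hf).mul (Complex.continuous_exp.comp
      ((continuous_const.mul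
        (Complex.continuous_ofReal.comp (continuous_id.inner continuous_const))).neg))
  · intro z
    filter_upwards with y
    rw [norm_mul]
    have : ‖Complex.exp (-(Complex.I * ((inner ℝ y z : ℝ) : ℂ)))‖ = 1 := by
      rw [Complex.norm_exp]
      simp
    rw [this, mul_one, Complex.norm_real, Real.norm_eq_abs]
  · exact (hf.integrable_of_hasCompactSupport hsupp).abs
  · filter_upwards with y
    apply Continuous.mul continuous_const
    exact Complex.continuous_exp.comp
      ((continuous_const.mul
        (Complex.continuous_ofReal.comp (continuous_const.inner continuous_id))).neg)

lemma norm_fHat_le (f : V d → ℝ) (z : V d) :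
    ‖fHat f z‖ ≤ ∫ y, |f y| := by
  calc ‖fHat f z‖ ≤ ∫ y, ‖(f y : ℂ) * Complex.exp (-(Complex.I * ((inner ℝ y z : ℝ) : ℂ)))‖ :=
        norm_integral_le_integral_norm _
    _ = ∫ y, |f y| := by
        apply integral_congr_ae; filter_upwards with y
        rw [norm_mul]
        have : ‖Complex.exp (-(Complex.I * ((inner ℝ y z : ℝ) : ℂ)))‖ = 1 := by
          rw [Complex.norm_exp]; simp
        rw [this, mul_one, Complex.norm_real, Real.norm_eq_abs]

lemma integral_comp_sub (φ : V d → ℂ) (x : V d) : ∫ y, φ (x - y) = ∫ y, φ y := by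
  calc ∫ y, φ (x - y) = ∫ y, φ (x + y) := by
        rw [← integral_neg_eq_self (fun y => φ (x + y)) volume]
        simp [sub_eq_add_neg]
    _ = ∫ y, φ y := integral_add_left_eq_self _ x

lemma smooth_rep {t : ℝ} (ht : 0 < t) (f : V d → ℝ) (hf : Continuous f)
    (hsupp : HasCompactSupport f) (x : V d) :
    ((∫ w, f (x - w) * gauss d t w : ℝ) : ℂ)
      = ∫ z, hker f t z * Complex.exp (Complex.I * ((inner ℝ x z : ℝ) : ℂ)) := by
  have hc : (0:ℝ) < (2*π)^d := by positivity
  have hcne : (((2*π)^d : ℝ) : ℂ) ≠ 0 := by exact_mod_cast hc.ne'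
  have hfx_cont : Continuous fun w : V d => f (x - w) :=
    hf.comp (continuous_const.sub continuous_id)
  have hfx_supp : HasCompactSupport fun w : V d => f (x - w) := by
    have := hsupp.comp_homeomorph (Homeomorph.subLeft x)
    exact this
  have hfx_int : Integrable fun w : V d => f (x - w) :=
    hfx_cont.integrable_of_hasCompactSupport hfx_supp
  set E : V d → V d → ℂ := fun w z =>
    Complex.exp (-(t:ℂ) * (‖z‖:ℂ)^2 + Complex.I * ((inner ℝ w z : ℝ) : ℂ)) with hE
  have hEcont : Continuous fun p : V d × V d => E p.1 p.2 := by
    apply Complex.continuous_exp.comp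
    apply Continuous.add
    · exact continuous_const.mul ((Complex.continuous_ofReal.comp continuous_snd.norm).pow 2)
    · exact continuous_const.mul
        (Complex.continuous_ofReal.comp (continuous_fst.inner continuous_snd))
  have hprod : Integrable (Function.uncurry fun w z => ((f (x - w) : ℂ)) * E w z)
      (volume.prod volume) := by
    apply Integrable.mono' (hfx_int.abs.mul_prod (integrable_rexp_neg_mul_sq_norm ht))
    · exact ((Complex.continuous_ofReal.comp (hfx_cont.comp continuous_fst)).mul
        hEcont).aestronglyMeasurable
    · filter_upwards with p
      rw [Function.uncurry_apply_pair, norm_mul, hE, norm_cexp_aux, Complex.norm_real,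
        Real.norm_eq_abs]
  calc ((∫ w, f (x - w) * gauss d t w : ℝ) : ℂ)
      = ∫ w, ((f (x-w) : ℂ)) * ((gauss d t w : ℝ) : ℂ) := by
        norm_cast
    _ = ∫ w, ((((2*π)^d : ℝ) : ℂ))⁻¹ * ∫ z, ((f (x-w) : ℂ)) * E w z := by
        apply integral_congr_ae; filter_upwards with w
        simp only [hE]
        rw [integral_const_mul, gauss_fourier ht w,
          show (((2*π)^d : ℝ):ℂ)⁻¹ * ((f (x-w) : ℂ) * ((((2*π)^d : ℝ):ℂ) * (gauss d t w : ℂ)))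
              = ((((2*π)^d : ℝ):ℂ)⁻¹ * (((2*π)^d : ℝ):ℂ)) * ((f (x-w):ℂ) * (gauss d t w : ℂ))
            by ring, inv_mul_cancel₀ hcne, one_mul]
    _ = ((((2*π)^d : ℝ) : ℂ))⁻¹ * ∫ w, ∫ z, ((f (x-w) : ℂ)) * E w z := integral_const_mul _ _
    _ = ((((2*π)^d : ℝ) : ℂ))⁻¹ * ∫ z, ∫ w, ((f (x-w) : ℂ)) * E w z := by
        rw [integral_integral_swap hprod]
    _ = ((((2*π)^d : ℝ) : ℂ))⁻¹ * ∫ z, Complex.exp (-(t:ℂ) * (‖z‖:ℂ)^2)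
          * (Complex.exp (Complex.I * ((inner ℝ x z : ℝ) : ℂ)) * fHat f z) := by
        congr 1
        apply integral_congr_ae; filter_upwards with z
        have step1 : ∀ w, ((f (x-w) : ℂ)) * E w z
            = Complex.exp (-(t:ℂ) * (‖z‖:ℂ)^2)
              * ((f (x-w) : ℂ) * Complex.exp (Complex.I * ((inner ℝ w z : ℝ) : ℂ))) := by
          intro w
          simp only [hE]
          rw [Complex.exp_add]
          ring
        rw [integral_congr_ae (Eventually.of_forall step1), integral_const_mul]
        congr 1
        have hsub := integral_comp_sub
          (fun w => ((f (x-w) : ℂ)) * Complex.exp (Complex.I * ((inner ℝ w z : ℝ) : ℂ))) x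
        rw [← hsub]
        have step2 : ∀ y : V d, ((f (x-(x-y)) : ℂ))
              * Complex.exp (Complex.I * ((inner ℝ (x-y) z : ℝ) : ℂ))
            = Complex.exp (Complex.I * ((inner ℝ x z : ℝ) : ℂ))
              * ((f y : ℂ) * Complex.exp (-(Complex.I * ((inner ℝ y z : ℝ) : ℂ)))) := by
          intro y
          rw [sub_sub_cancel, inner_sub_left]
          push_cast
          rw [mul_sub, sub_eq_add_neg, Complex.exp_add]
          ring
        rw [integral_congr_ae (Eventually.of_forall step2), integral_const_mul]
        rfl
    _ = ∫ z, hker f t z * Complex.exp (Complex.I * ((inner ℝ x z : ℝ) : ℂ)) := by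
        rw [← integral_const_mul]
        apply integral_congr_ae; filter_upwards with z
        unfold hker
        ring

lemma norm_cexp_neg_mul_sq (t : ℝ) (z : V d) :
    ‖Complex.exp (-(t:ℂ) * (‖z‖:ℂ)^2)‖ = rexp (-t * ‖z‖^2) := by
  rw [show -(t:ℂ) * (‖z‖:ℂ)^2 = ((-t * ‖z‖^2 : ℝ) : ℂ) by push_cast; ring,
    Complex.norm_exp, Complex.ofReal_re]

lemma continuous_hker (f : V d → ℝ) (hf : Continuous f) (hsupp : HasCompactSupport f) (t : ℝ) :
    Continuous (hker f t) := by
  apply Continuous.mul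
  · exact continuous_const.mul (Complex.continuous_exp.comp
      (continuous_const.mul ((Complex.continuous_ofReal.comp continuous_norm).pow 2)))
  · exact continuous_fHat f hf hsupp

lemma norm_hker_le (f : V d → ℝ) {t : ℝ} (z : V d) :
    ‖hker f t z‖ ≤ (((2*π)^d : ℝ))⁻¹ * (∫ y, |f y|) * rexp (-t * ‖z‖^2) := by
  have hc : (0:ℝ) < (2*π)^d := by positivity
  unfold hker
  rw [norm_mul, norm_mul, norm_inv, Complex.norm_real, Real.norm_eq_abs,
    abs_of_pos hc, norm_cexp_neg_mul_sq]
  calc ((2*π)^d : ℝ)⁻¹ * rexp (-t * ‖z‖^2) * ‖fHat f z‖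
      ≤ ((2*π)^d : ℝ)⁻¹ * rexp (-t * ‖z‖^2) * (∫ y, |f y|) := by
        apply mul_le_mul_of_nonneg_left (norm_fHat_le f z) (by positivity)
    _ = (((2*π)^d : ℝ))⁻¹ * (∫ y, |f y|) * rexp (-t * ‖z‖^2) := by ring

lemma integral_smooth {t : ℝ} (ht : 0 < t) (f : V d → ℝ) (hf : Continuous f)
    (hsupp : HasCompactSupport f) (ν : Measure (V d)) [IsProbabilityMeasure ν] :
    ((∫ x, (∫ w, f (x - w) * gauss d t w) ∂ν : ℝ) : ℂ)
      = ∫ z, hker f t z * charFn ν z := by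
  set B : V d → ℝ := fun z => (((2*π)^d : ℝ))⁻¹ * (∫ y, |f y|) * rexp (-t * ‖z‖^2) with hBdef
  have hBint : Integrable B := (integrable_rexp_neg_mul_sq_norm ht).const_mul _
  have hGint : Integrable (Function.uncurry fun (x : V d) (z : V d) =>
      hker f t z * Complex.exp (Complex.I * ((inner ℝ x z : ℝ) : ℂ))) (ν.prod volume) := by
    have hB1 : Integrable (fun p : V d × V d => (1:ℝ) * B p.2) (ν.prod volume) :=
      (integrable_const (1:ℝ)).mul_prod hBint
    apply Integrable.mono' hB1
    · apply Continuous.aestronglyMeasurable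
      apply Continuous.mul
      · exact (continuous_hker f hf hsupp t).comp continuous_snd
      · exact Complex.continuous_exp.comp (continuous_const.mul
          (Complex.continuous_ofReal.comp (continuous_fst.inner continuous_snd)))
    · filter_upwards with p
      rw [Function.uncurry_apply_pair, norm_mul]
      have h1 : ‖Complex.exp (Complex.I * ((inner ℝ p.1 p.2 : ℝ) : ℂ))‖ = 1 := by
        rw [Complex.norm_exp]; simp
      rw [h1, mul_one, one_mul]
      exact norm_hker_le f p.2
  calc ((∫ x, (∫ w, f (x - w) * gauss d t w) ∂ν : ℝ) : ℂ)
      = ∫ x, ((∫ w, f (x - w) * gauss d t w : ℝ) : ℂ) ∂ν := (integral_ofReal (𝕜 := ℂ)).symm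
    _ = ∫ x, (∫ z, hker f t z * Complex.exp (Complex.I * ((inner ℝ x z : ℝ) : ℂ))) ∂ν := by
        apply integral_congr_ae; filter_upwards with x
        exact smooth_rep ht f hf hsupp x
    _ = ∫ z, (∫ x, hker f t z * Complex.exp (Complex.I * ((inner ℝ x z : ℝ) : ℂ)) ∂ν) := by
        exact integral_integral_swap hGint
    _ = ∫ z, hker f t z * charFn ν z := by
        apply integral_congr_ae; filter_upwards with z
        rw [integral_const_mul]
        congr 1
        unfold charFn
        apply integral_congr_ae; filter_upwards with x
        rw [real_inner_comm, mul_comm]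

lemma tendsto_smooth (μ : ℕ → Measure (V d)) (μlim : Measure (V d))
    [∀ k, IsProbabilityMeasure (μ k)] [IsProbabilityMeasure μlim]
    (hchar : ∀ᵐ z ∂(volume : Measure (V d)),
      Tendsto (fun k => charFn (μ k) z) atTop (𝓝 (charFn μlim z)))
    {t : ℝ} (ht : 0 < t) (f : V d → ℝ) (hf : Continuous f) (hsupp : HasCompactSupport f) :
    Tendsto (fun k => ∫ x, (∫ w, f (x - w) * gauss d t w) ∂(μ k)) atTop
      (𝓝 (∫ x, (∫ w, f (x - w) * gauss d t w) ∂μlim)) := by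
  set B : V d → ℝ := fun z => (((2*π)^d : ℝ))⁻¹ * (∫ y, |f y|) * rexp (-t * ‖z‖^2) with hBdef
  have hBint : Integrable B := (integrable_rexp_neg_mul_sq_norm ht).const_mul _
  have hC : Tendsto (fun k => ∫ z, hker f t z * charFn (μ k) z) atTop
      (𝓝 (∫ z, hker f t z * charFn μlim z)) := by
    apply tendsto_integral_of_dominated_convergence B
    · intro k
      exact ((continuous_hker f hf hsupp t).mul (continuous_charFn (μ k))).aestronglyMeasurable
    · exact hBint
    · intro k
      filter_upwards with z
      rw [norm_mul]
      calc ‖hker f t z‖ * ‖charFn (μ k) z‖ ≤ ‖hker f t z‖ * 1 :=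
            mul_le_mul_of_nonneg_left (charFn_norm_le (μ k) z) (norm_nonneg _)
        _ = ‖hker f t z‖ := mul_one _
        _ ≤ B z := norm_hker_le f z
    · filter_upwards [hchar] with z hz
      exact hz.const_mul (hker f t z)
  have h1 : ∀ (ν : Measure (V d)) [IsProbabilityMeasure ν],
      ∫ x, (∫ w, f (x - w) * gauss d t w) ∂ν = (∫ z, hker f t z * charFn ν z).re := by
    intro ν _
    rw [← integral_smooth ht f hf hsupp ν, Complex.ofReal_re]
  have goalEq : (fun k => ∫ x, (∫ w, f (x - w) * gauss d t w) ∂(μ k))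
      = fun k => (∫ z, hker f t z * charFn (μ k) z).re := funext fun k => h1 (μ k)
  rw [goalEq, h1 μlim]
  exact (Complex.continuous_re.tendsto _).comp hC

lemma smooth_close (f : V d → ℝ) (hf : Continuous f) (hsupp : HasCompactSupport f)
    {ε : ℝ} (hε : 0 < ε) :
    ∃ t : ℝ, 0 < t ∧ ∀ x, |(∫ w, f (x - w) * gauss d t w) - f x| ≤ ε := by
  obtain ⟨C, hC⟩ := hsupp.exists_bound_of_continuous hf
  have hC0 : 0 ≤ C := le_trans (norm_nonneg _) (hC 0)
  have huc : UniformContinuous f := hsupp.uniformContinuous_of_continuous hf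
  rw [Metric.uniformContinuous_iff] at huc
  obtain ⟨δ, hδ0, hδ⟩ := huc (ε/2) (half_pos hε)
  obtain ⟨t, ht0, _ht1, htail⟩ := gauss_tail (d := d) hδ0
    (show 0 < ε/(2*(2*C+1)) by positivity)
  refine ⟨t, ht0, fun x => ?_⟩
  have hg_int := integrable_gauss (d := d) ht0
  have habs : ∀ w : V d, |gauss d t w| = gauss d t w := fun w => abs_of_pos (gauss_pos ht0 w)
  have hint1 : Integrable (fun w => f (x - w) * gauss d t w) := by
    apply Integrable.mono' (hg_int.const_mul C)
    · exact ((hf.comp (continuous_const.sub continuous_id)).mul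
        (continuous_gauss t)).aestronglyMeasurable
    · filter_upwards with w
      rw [Real.norm_eq_abs, abs_mul, habs w]
      exact mul_le_mul_of_nonneg_right (hC _) (gauss_pos ht0 w).le
  have hint2 : Integrable (fun w : V d => f x * gauss d t w) := hg_int.const_mul _
  have hint3 : Integrable (fun w => |f (x - w) - f x| * gauss d t w) := by
    apply Integrable.mono' (hg_int.const_mul (2*C))
    · exact (((hf.comp (continuous_const.sub continuous_id)).sub continuous_const).abs.mul
        (continuous_gauss t)).aestronglyMeasurable
    · filter_upwards with w
      rw [Real.norm_eq_abs, abs_mul, habs w, _root_.abs_abs]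
      apply mul_le_mul_of_nonneg_right _ (gauss_pos ht0 w).le
      calc |f (x - w) - f x| ≤ |f (x-w)| + |f x| := abs_sub _ _
        _ ≤ C + C := add_le_add (hC _) (hC _)
        _ = 2*C := by ring
  have key : (∫ w, f (x - w) * gauss d t w) - f x
      = ∫ w, (f (x - w) - f x) * gauss d t w := by
    rw [eq_comm]
    calc ∫ w, (f (x - w) - f x) * gauss d t w
        = ∫ w, (f (x - w) * gauss d t w - f x * gauss d t w) := by
          apply integral_congr_ae; filter_upwards with w; ring
      _ = (∫ w, f (x - w) * gauss d t w) - ∫ w, f x * gauss d t w :=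
          integral_sub hint1 hint2
      _ = (∫ w, f (x - w) * gauss d t w) - f x := by
          rw [integral_const_mul, integral_gauss ht0, mul_one]
  rw [key]
  have hball : MeasurableSet (Metric.ball (0:V d) δ) := Metric.isOpen_ball.measurableSet
  calc |∫ w, (f (x - w) - f x) * gauss d t w|
      ≤ ∫ w, |f (x - w) - f x| * gauss d t w := by
        simpa [Real.norm_eq_abs, abs_mul, habs] using
          norm_integral_le_integral_norm (fun w => (f (x - w) - f x) * gauss d t w)
    _ = (∫ w in Metric.ball (0:V d) δ, |f (x - w) - f x| * gauss d t w)
        + ∫ w in (Metric.ball (0:V d) δ)ᶜ, |f (x - w) - f x| * gauss d t w :=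
        (integral_add_compl hball hint3).symm
    _ ≤ ε/2 + ε/2 := by
        apply add_le_add
        · calc ∫ w in Metric.ball (0:V d) δ, |f (x - w) - f x| * gauss d t w
              ≤ ∫ w in Metric.ball (0:V d) δ, (ε/2) * gauss d t w := by
                apply setIntegral_mono_on hint3.integrableOn
                  ((hg_int.const_mul (ε/2)).integrableOn) hball
                intro w hw
                apply mul_le_mul_of_nonneg_right _ (gauss_pos ht0 w).le
                have hwd : dist (x - w) x < δ := by
                  rw [dist_eq_norm]
                  simpa using (by simpa [dist_zero_right] using hw : ‖w‖ < δ)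
                have := hδ hwd
                rw [Real.dist_eq] at this
                exact this.le
            _ = (ε/2) * ∫ w in Metric.ball (0:V d) δ, gauss d t w := integral_const_mul _ _
            _ ≤ (ε/2) * 1 := by
                apply mul_le_mul_of_nonneg_left _ (half_pos hε).le
                rw [← integral_gauss (d := d) ht0]
                exact setIntegral_le_integral hg_int
                  (Eventually.of_forall fun w => (gauss_pos ht0 w).le)
            _ = ε/2 := mul_one _
        · calc ∫ w in (Metric.ball (0:V d) δ)ᶜ, |f (x - w) - f x| * gauss d t w
              ≤ ∫ w in (Metric.ball (0:V d) δ)ᶜ, (2*C) * gauss d t w := by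
                apply setIntegral_mono_on hint3.integrableOn
                  ((hg_int.const_mul (2*C)).integrableOn) hball.compl
                intro w _
                apply mul_le_mul_of_nonneg_right _ (gauss_pos ht0 w).le
                calc |f (x - w) - f x| ≤ |f (x-w)| + |f x| := abs_sub _ _
                  _ ≤ C + C := add_le_add (hC _) (hC _)
                  _ = 2*C := by ring
            _ = (2*C) * ∫ w in (Metric.ball (0:V d) δ)ᶜ, gauss d t w := integral_const_mul _ _
            _ ≤ (2*C) * (ε/(2*(2*C+1))) :=
                mul_le_mul_of_nonneg_left htail.le (by positivity)
            _ ≤ ε/2 := by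
                have hD : (0:ℝ) < 2*(2*C+1) := by positivity
                rw [← mul_div_assoc, div_le_div_iff₀ hD (by norm_num : (0:ℝ) < 2)]
                nlinarith [hε.le, hC0]
    _ = ε := by ring

lemma tendsto_cc (μ : ℕ → Measure (V d)) (μlim : Measure (V d))
    [∀ k, IsProbabilityMeasure (μ k)] [IsProbabilityMeasure μlim]
    (hchar : ∀ᵐ z ∂(volume : Measure (V d)),
      Tendsto (fun k => charFn (μ k) z) atTop (𝓝 (charFn μlim z)))
    (f : V d → ℝ) (hf : Continuous f) (hsupp : HasCompactSupport f) :
    Tendsto (fun k => ∫ x, f x ∂(μ k)) atTop (𝓝 (∫ x, f x ∂μlim)) := by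
  rw [Metric.tendsto_atTop]
  intro ε hε
  obtain ⟨t, ht0, hclose⟩ := smooth_close f hf hsupp (show 0 < ε/4 by positivity)
  set F : V d → ℝ := fun x => ∫ w, f (x - w) * gauss d t w with hFdef
  obtain ⟨C, hC⟩ := hsupp.exists_bound_of_continuous hf
  have hC0 : 0 ≤ C := le_trans (norm_nonneg _) (hC 0)
  have hg_int := integrable_gauss (d := d) ht0
  have habs : ∀ w : V d, |gauss d t w| = gauss d t w := fun w => abs_of_pos (gauss_pos ht0 w)
  have hfw_int : ∀ x : V d, Integrable (fun w => f (x - w) * gauss d t w) := by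
    intro x
    apply Integrable.mono' (hg_int.const_mul C)
    · exact ((hf.comp (continuous_const.sub continuous_id)).mul
        (continuous_gauss t)).aestronglyMeasurable
    · filter_upwards with w
      rw [Real.norm_eq_abs, abs_mul, habs w]
      exact mul_le_mul_of_nonneg_right (hC _) (gauss_pos ht0 w).le
  have hF_cont : Continuous F := by
    apply continuous_of_dominated (bound := fun w => C * gauss d t w)
    · intro x
      exact ((hf.comp (continuous_const.sub continuous_id)).mul
        (continuous_gauss t)).aestronglyMeasurable
    · intro x
      filter_upwards with w
      rw [Real.norm_eq_abs, abs_mul, habs w]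
      exact mul_le_mul_of_nonneg_right (hC _) (gauss_pos ht0 w).le
    · exact hg_int.const_mul C
    · filter_upwards with w
      exact (hf.comp (continuous_id.sub continuous_const)).mul continuous_const
  have hF_bdd : ∀ x, ‖F x‖ ≤ C := by
    intro x
    rw [Real.norm_eq_abs, hFdef]
    calc |∫ w, f (x - w) * gauss d t w| ≤ ∫ w, |f (x - w)| * gauss d t w := by
          simpa [Real.norm_eq_abs, abs_mul, habs] using
            norm_integral_le_integral_norm (fun w => f (x - w) * gauss d t w)
      _ ≤ ∫ w, C * gauss d t w := by
          apply integral_mono _ (hg_int.const_mul C)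
          · intro w
            exact mul_le_mul_of_nonneg_right (by simpa [Real.norm_eq_abs] using hC (x - w))
              (gauss_pos ht0 w).le
          · have := (hfw_int x).abs
            simpa [abs_mul, habs] using this
      _ = C := by rw [integral_const_mul, integral_gauss ht0, mul_one]
  have hfint : ∀ (ν : Measure (V d)) [IsProbabilityMeasure ν], Integrable f ν := by
    intro ν _
    exact Integrable.mono' (integrable_const C) hf.aestronglyMeasurable
      (Eventually.of_forall hC)
  have hFint : ∀ (ν : Measure (V d)) [IsProbabilityMeasure ν], Integrable F ν := by
    intro ν _
    exact Integrable.mono' (integrable_const C) hF_cont.aestronglyMeasurable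
      (Eventually.of_forall hF_bdd)
  have hdiff : ∀ (ν : Measure (V d)) [IsProbabilityMeasure ν],
      |(∫ x, f x ∂ν) - ∫ x, F x ∂ν| ≤ ε/4 := by
    intro ν _
    rw [← integral_sub (hfint ν) (hFint ν)]
    calc |∫ x, (f x - F x) ∂ν| ≤ ∫ x, |f x - F x| ∂ν := by
          simpa [Real.norm_eq_abs] using
            norm_integral_le_integral_norm (μ := ν) (fun x => f x - F x)
      _ ≤ ∫ _x, (ε/4) ∂ν := by
          apply integral_mono ((hfint ν).sub (hFint ν)).abs (integrable_const _)
          intro x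
          show |f x - F x| ≤ ε/4
          rw [abs_sub_comm]
          exact hclose x
      _ = ε/4 := by simp
  have hmid' : Tendsto (fun k => ∫ x, F x ∂(μ k)) atTop (𝓝 (∫ x, F x ∂μlim)) := by
    simpa only [← hFdef] using tendsto_smooth μ μlim hchar ht0 f hf hsupp
  rw [Metric.tendsto_atTop] at hmid'
  obtain ⟨N, hN⟩ := hmid' (ε/4) (by positivity)
  refine ⟨N, fun k hk => ?_⟩
  have h1 := hdiff (μ k)
  have h2 := hdiff μlim
  have h3 := hN k hk
  rw [Real.dist_eq] at h3 ⊢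
  have hsplit : (∫ x, f x ∂(μ k)) - ∫ x, f x ∂μlim
      = ((∫ x, f x ∂(μ k)) - ∫ x, F x ∂(μ k))
        + ((∫ x, F x ∂(μ k)) - ∫ x, F x ∂μlim)
        + ((∫ x, F x ∂μlim) - ∫ x, f x ∂μlim) := by ring
  rw [hsplit]
  calc |_ + _ + _| ≤ |(∫ x, f x ∂(μ k)) - ∫ x, F x ∂(μ k)|
        + |(∫ x, F x ∂(μ k)) - ∫ x, F x ∂μlim|
        + |(∫ x, F x ∂μlim) - ∫ x, f x ∂μlim| := abs_add_three _ _ _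
    _ < ε := by
        have h2' : |(∫ x, F x ∂μlim) - ∫ x, f x ∂μlim| ≤ ε/4 := by
          rw [abs_sub_comm]; exact h2
        linarith

noncomputable def cutoff (d : ℕ) (R : ℝ) (x : V d) : ℝ := max 0 (min 1 (R + 1 - ‖x‖))

lemma cutoff_continuous (R : ℝ) : Continuous (cutoff d R) :=
  continuous_const.max (continuous_const.min (continuous_const.sub continuous_norm))

lemma cutoff_compactSupport (R : ℝ) : HasCompactSupport (cutoff d R) := by
  apply HasCompactSupport.intro (isCompact_closedBall (0 : V d) (R+1))
  intro x hx
  have : R + 1 < ‖x‖ := by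
    simpa [dist_zero_right] using (not_le.mp (fun h => hx (Metric.mem_closedBall.mpr
      (by simpa [dist_zero_right] using h))))
  unfold cutoff
  rw [max_eq_left]
  exact le_trans (min_le_right _ _) (by linarith)

lemma cutoff_nonneg (R : ℝ) (x : V d) : 0 ≤ cutoff d R x := le_max_left _ _

lemma cutoff_le_one (R : ℝ) (x : V d) : cutoff d R x ≤ 1 :=
  max_le zero_le_one (min_le_left _ _)

lemma cutoff_eventually_one (x : V d) :
    Tendsto (fun n : ℕ => cutoff d n x) atTop (𝓝 1) := by
  apply tendsto_atTop_of_eventually_const (i₀ := ⌈‖x‖⌉₊)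
  intro n hn
  unfold cutoff
  have h1 : (1:ℝ) ≤ (n:ℝ) + 1 - ‖x‖ := by
    have : ‖x‖ ≤ (n:ℝ) := le_trans (Nat.le_ceil _) (by exact_mod_cast hn)
    linarith
  rw [min_eq_left h1, max_eq_right zero_le_one]

theorem stmt4' (μ : ℕ → Measure (V d)) (μlim : Measure (V d))
    [∀ k, IsProbabilityMeasure (μ k)] [IsProbabilityMeasure μlim]
    (hchar : ∀ᵐ z ∂(volume : Measure (V d)),
      Tendsto (fun k => charFn (μ k) z) atTop (𝓝 (charFn μlim z))) :
    ∀ f : BoundedContinuousFunction (V d) ℝ,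
      Tendsto (fun k => ∫ x, f x ∂(μ k)) atTop (𝓝 (∫ x, f x ∂μlim)) := by
  intro f
  rw [Metric.tendsto_atTop]
  intro ε hε
  set B : ℝ := ‖f‖ + 1 with hBdef
  have hB0 : (0:ℝ) < B := by
    have := norm_nonneg f; rw [hBdef]; linarith
  have hfB : ∀ x : V d, |f x| ≤ B := by
    intro x
    rw [← Real.norm_eq_abs]
    calc ‖f x‖ ≤ ‖f‖ := f.norm_coe_le_norm x
      _ ≤ B := by rw [hBdef]; linarith
  set ε' : ℝ := ε / (2 * (2 * B + 1)) with hε'def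
  have hε'0 : 0 < ε' := by rw [hε'def]; positivity
  -- choose cutoff level
  have hto1 : Tendsto (fun n : ℕ => ∫ x, cutoff d n x ∂μlim) atTop (𝓝 1) := by
    have h1 : (1:ℝ) = ∫ _x, (1:ℝ) ∂μlim := by simp
    rw [h1]
    apply tendsto_integral_of_dominated_convergence (fun _ => (1:ℝ))
    · exact fun n => (cutoff_continuous _).aestronglyMeasurable
    · exact integrable_const 1
    · intro n
      filter_upwards with x
      rw [Real.norm_eq_abs, _root_.abs_of_nonneg (cutoff_nonneg _ x)]
      exact cutoff_le_one _ x
    · filter_upwards with x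
      exact cutoff_eventually_one x
  obtain ⟨n, hn⟩ := (hto1.eventually (eventually_gt_nhds (by linarith : 1 - ε' < 1))).exists
  set χ : V d → ℝ := cutoff d n with hχdef
  have hχc : Continuous χ := cutoff_continuous n
  have hχs : HasCompactSupport χ := cutoff_compactSupport n
  have hχ0 : ∀ x, 0 ≤ χ x := cutoff_nonneg n
  have hχ1 : ∀ x, χ x ≤ 1 := cutoff_le_one n
  -- integrabilities against probability measures
  have hint_f : ∀ (ν : Measure (V d)) [IsProbabilityMeasure ν], Integrable (fun x => f x) ν :=
    fun ν _ => f.integrable ν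
  have hint_χ : ∀ (ν : Measure (V d)) [IsProbabilityMeasure ν], Integrable χ ν := by
    intro ν _
    apply Integrable.mono' (integrable_const (1:ℝ)) hχc.aestronglyMeasurable
    filter_upwards with x
    rw [Real.norm_eq_abs, _root_.abs_of_nonneg (hχ0 x)]
    exact hχ1 x
  have hint_fχ : ∀ (ν : Measure (V d)) [IsProbabilityMeasure ν],
      Integrable (fun x => f x * χ x) ν := by
    intro ν _
    apply Integrable.mono' (integrable_const B) (f.continuous.mul hχc).aestronglyMeasurable
    filter_upwards with x
    rw [Real.norm_eq_abs, Pi.mul_apply, abs_mul]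
    calc |f x| * |χ x| ≤ B * 1 := by
          apply mul_le_mul (hfB x) _ (abs_nonneg _) hB0.le
          rw [_root_.abs_of_nonneg (hχ0 x)]; exact hχ1 x
      _ = B := mul_one B
  -- the tail bound
  have htail : ∀ (ν : Measure (V d)) [IsProbabilityMeasure ν],
      |(∫ x, f x ∂ν) - ∫ x, f x * χ x ∂ν| ≤ B * (1 - ∫ x, χ x ∂ν) := by
    intro ν _
    rw [← integral_sub (hint_f ν) (hint_fχ ν)]
    calc |∫ x, (f x - f x * χ x) ∂ν| ≤ ∫ x, |f x - f x * χ x| ∂ν := by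
          simpa [Real.norm_eq_abs] using
            norm_integral_le_integral_norm (μ := ν) (fun x => f x - f x * χ x)
      _ ≤ ∫ x, B * (1 - χ x) ∂ν := by
          apply integral_mono ((hint_f ν).sub (hint_fχ ν)).abs
            (((integrable_const (1:ℝ)).sub (hint_χ ν)).const_mul B)
          intro x
          show |f x - f x * χ x| ≤ B * (1 - χ x)
          have h1 : f x - f x * χ x = f x * (1 - χ x) := by ring
          rw [h1, abs_mul, _root_.abs_of_nonneg (by linarith [hχ1 x] : (0:ℝ) ≤ 1 - χ x)]
          exact mul_le_mul_of_nonneg_right (hfB x) (by linarith [hχ1 x])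
      _ = B * (1 - ∫ x, χ x ∂ν) := by
          rw [integral_const_mul, integral_sub (integrable_const 1) (hint_χ ν)]
          simp
  -- convergence of the two compactly supported integrals
  have hkey1 := tendsto_cc μ μlim hchar (fun x => f x * χ x)
    (f.continuous.mul hχc) (by
      apply HasCompactSupport.intro (hχs.isCompact)
      intro x hx
      have : χ x = 0 := by
        by_contra h
        exact hx (subset_tsupport χ h)
      simp [this])
  have hkey2 := tendsto_cc μ μlim hchar χ hχc hχs
  have E1 : ∀ᶠ k in atTop, |(∫ x, f x * χ x ∂(μ k)) - ∫ x, f x * χ x ∂μlim| < ε' := by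
    have := Metric.tendsto_atTop.mp hkey1 ε' hε'0
    obtain ⟨N, hN⟩ := this
    rw [eventually_atTop]
    exact ⟨N, fun k hk => by rw [← Real.dist_eq]; exact hN k hk⟩
  have E2 : ∀ᶠ k in atTop, 1 - ε' < ∫ x, χ x ∂(μ k) :=
    hkey2.eventually (eventually_gt_nhds hn)
  obtain ⟨N, hN⟩ := eventually_atTop.mp (E1.and E2)
  refine ⟨N, fun k hk => ?_⟩
  obtain ⟨h1, h2⟩ := hN k hk
  rw [Real.dist_eq]
  have hsplit : (∫ x, f x ∂(μ k)) - ∫ x, f x ∂μlim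
      = ((∫ x, f x * χ x ∂(μ k)) - ∫ x, f x * χ x ∂μlim)
        + ((∫ x, f x ∂(μ k)) - ∫ x, f x * χ x ∂(μ k))
        + -((∫ x, f x ∂μlim) - ∫ x, f x * χ x ∂μlim) := by ring
  rw [hsplit]
  have t1 := htail (μ k)
  have t2 := htail μlim
  have hb1 : B * (1 - ∫ x, χ x ∂(μ k)) ≤ B * ε' :=
    mul_le_mul_of_nonneg_left (by linarith) hB0.le
  have hb2 : B * (1 - ∫ x, χ x ∂μlim) ≤ B * ε' :=
    mul_le_mul_of_nonneg_left (by linarith) hB0.le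
  calc |_ + _ + _|
      ≤ |(∫ x, f x * χ x ∂(μ k)) - ∫ x, f x * χ x ∂μlim|
        + |(∫ x, f x ∂(μ k)) - ∫ x, f x * χ x ∂(μ k)|
        + |-((∫ x, f x ∂μlim) - ∫ x, f x * χ x ∂μlim)| := abs_add_three _ _ _
    _ ≤ ε' + B * ε' + B * ε' := by
        apply add_le_add (add_le_add h1.le (le_trans t1 hb1))
        rw [abs_neg]
        exact le_trans t2 hb2
    _ < ε := by
        have : ε' * (2 * B + 1) = ε / 2 := by
          rw [hε'def]; field_simp
        nlinarith [hε'0, hB0]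

end StmtAux

/-- If the characteristic functions of μ_k converge to that of μ for Lebesgue-a.e.
z ∈ ℝ^d, then μ_k converges weakly to μ. -/
theorem stmt4 {d : ℕ}
    (μ : ℕ → Measure (EuclideanSpace ℝ (Fin d))) (μlim : Measure (EuclideanSpace ℝ (Fin d)))
    [∀ k, IsProbabilityMeasure (μ k)] [IsProbabilityMeasure μlim]
    (hchar : ∀ᵐ z ∂(volume : Measure (EuclideanSpace ℝ (Fin d))),
      Tendsto (fun k => charFn (μ k) z) atTop (𝓝 (charFn μlim z))) :
    ∀ f : BoundedContinuousFunction (EuclideanSpace ℝ (Fin d)) ℝ,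
      Tendsto (fun k => ∫ x, f x ∂(μ k)) atTop (𝓝 (∫ x, f x ∂μlim)) :=
  StmtAux.stmt4' μ μlim hchar
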